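/- arXiv:2509.09354 — 2 statements merged into one kernel-verified Lean document; each statement's English description precedes it below -/
import Mathlib

section
/- Let $\sigma$ be a Borel probability measure on $\mathbb{R}^n$ that is $(D,\beta)$-uniformly perfect with $D > 1$ and $\beta \in (0,1)$. Then $\sigma$ satisfies the Frostman condition $\sigma(B(x,r)) \le (2D)^s \operatorname{diam}(\operatorname{spt}\sigma)^{-s} \cdot r^s$ for all $x \in \mathbb{R}^n$ and $r > 0$, where $s = -\log\beta/\log D > 0$. -/
open MeasureTheory Metric

/-- The support of a measure: points all of whose balls have positive measure. -/
def spt {n : ℕ} (σ : Measure (EuclideanSpace ℝ (Fin n))) : Set (EuclideanSpace ℝ (Fin n)) :=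
  {x | ∀ r > 0, 0 < σ (ball x r)}

/-- `(D, β)`-uniformly perfect measure on `ℝ^n`. -/
def UniformlyPerfect {n : ℕ} (σ : Measure (EuclideanSpace ℝ (Fin n))) (D β : ℝ) : Prop :=
  0 < EMetric.diam (spt σ) ∧
    ∀ x r, 0 < r → ¬ spt σ ⊆ ball x (D * r) →
      σ (ball x r) ≤ ENNReal.ofReal β * σ (ball x (D * r))

/-! Since `β = D^(-s)`, the inequality `σ(B(x,r)) ≤ β σ(B(x,Dr))` can be iterated as long as
the enlarged ball misses part of the support, i.e. at least while `2 D^(j+1) r < diam (spt σ)`.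
Stopping at the first `k` with `diam (spt σ) ≤ 2 D^(k+1) r` gives
`σ(B(x,r)) ≤ β^k = (D^k)^(-s) ≤ (2Dr / diam (spt σ))^s`.
If the support were unbounded the iteration would never stop, so every ball would be null;
hence the support is bounded and its diameter is a positive real. -/

def ReverseDoubling {X : Type*} [PseudoMetricSpace X] [MeasurableSpace X]
    (μ : Measure X) (S : Set X) (D : ℝ) (c : ENNReal) : Prop :=
  ∀ x r, 0 < r → ¬ S ⊆ ball x (D * r) → μ (ball x r) ≤ c * μ (ball x (D * r))

namespace ReverseDoubling

variable {X : Type*} [PseudoMetricSpace X] [MeasurableSpace X]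
  {μ : Measure X} {S : Set X} {D : ℝ} {c : ENNReal}

theorem measure_ball_le_pow_mul (h : ReverseDoubling μ S D c) (hD : 0 < D) :
    ∀ (k : ℕ) (x : X) {r : ℝ}, 0 < r → (∀ j < k, ¬ S ⊆ ball x (D ^ (j + 1) * r)) →
      μ (ball x r) ≤ c ^ k * μ (ball x (D ^ k * r))
  | 0, x, r, _, _ => by simp
  | k + 1, x, r, hr, hS => by
    have hS' : ∀ j < k, ¬ S ⊆ ball x (D ^ (j + 1) * (D * r)) := fun j hj => by
      simpa only [pow_succ, mul_assoc] using hS (j + 1) (by omega)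
    calc μ (ball x r) ≤ c * μ (ball x (D * r)) := h x r hr (by simpa using hS 0 k.succ_pos)
      _ ≤ c * (c ^ k * μ (ball x (D ^ k * (D * r)))) := by
        gcongr; exact measure_ball_le_pow_mul h hD k x (mul_pos hD hr) hS'
      _ = c ^ (k + 1) * μ (ball x (D ^ (k + 1) * r)) := by
        rw [← mul_assoc, ← pow_succ', ← mul_assoc, ← pow_succ]

theorem measure_ball_le_pow [IsProbabilityMeasure μ] (h : ReverseDoubling μ S D c) (hD : 0 < D)
    (k : ℕ) (x : X) {r : ℝ} (hr : 0 < r) (hS : ∀ j < k, ¬ S ⊆ ball x (D ^ (j + 1) * r)) :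
    μ (ball x r) ≤ c ^ k :=
  (h.measure_ball_le_pow_mul hD k x hr hS).trans (mul_le_of_le_one_right' prob_le_one)

theorem isBounded [IsProbabilityMeasure μ] (h : ReverseDoubling μ S D c) (hD : 0 < D)
    (hc : c < 1) : Bornology.IsBounded S := by
  by_contra hS
  have hball_null (x : X) (r : ℝ) (hr : 0 < r) : μ (ball x r) = 0 := by
    refine le_antisymm (ge_of_tendsto' (ENNReal.tendsto_pow_atTop_nhds_zero_of_lt_one hc)
      fun k => h.measure_ball_le_pow hD k x hr fun j _ hsub => hS ?_) bot_le
    exact isBounded_ball.subset hsub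
  obtain ⟨x⟩ : Nonempty X := nonempty_of_isProbabilityMeasure μ
  have huniv := measure_iUnion_null (μ := μ) fun i : ℕ => hball_null x (i + 1) (by positivity)
  rw [iUnion_ball_nat_succ, measure_univ] at huniv
  exact one_ne_zero huniv

theorem measure_ball_le_rpow [IsProbabilityMeasure μ] {s : ℝ}
    (h : ReverseDoubling μ S D (ENNReal.ofReal (D ^ (-s)))) (hD : 1 < D) (hs : 0 ≤ s)
    (hd : 0 < diam S) (x : X) {r : ℝ} (hr : 0 < r) :
    μ (ball x r) ≤ ENNReal.ofReal ((2 * D * r / diam S) ^ s) := by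
  have hD0 : 0 < D := one_pos.trans hD
  have hexists : ∃ k : ℕ, diam S ≤ 2 * D ^ (k + 1) * r := by
    obtain ⟨k, hk⟩ := pow_unbounded_of_one_lt (diam S / (2 * D * r)) hD
    rw [div_lt_iff₀ (by positivity)] at hk
    exact ⟨k, hk.le.trans_eq (by ring)⟩
  set k := Nat.find hexists
  have hnot_subset (j : ℕ) (hj : j < k) : ¬ S ⊆ ball x (D ^ (j + 1) * r) := fun hsub =>
    Nat.find_min hexists hj <|
      (diam_mono hsub isBounded_ball).trans ((diam_ball (by positivity)).trans_eq (by ring))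
  have hpow : (D ^ (-s)) ^ k = ((D ^ k)⁻¹) ^ s := by
    rw [Real.rpow_pow_comm hD0.le, Real.rpow_neg (by positivity), Real.inv_rpow (by positivity)]
  calc μ (ball x r) ≤ ENNReal.ofReal (D ^ (-s)) ^ k :=
        h.measure_ball_le_pow hD0 k x hr hnot_subset
    _ = ENNReal.ofReal (((D ^ k)⁻¹) ^ s) := by rw [← ENNReal.ofReal_pow (by positivity), hpow]
    _ ≤ ENNReal.ofReal ((2 * D * r / diam S) ^ s) := by
      refine ENNReal.ofReal_le_ofReal (Real.rpow_le_rpow (by positivity) ?_ hs)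
      rw [le_div_iff₀ hd, inv_mul_le_iff₀ (by positivity)]
      exact (Nat.find_spec hexists).trans_eq (by ring)

end ReverseDoubling

/-- a `(D,β)`-uniformly perfect probability measure satisfies the Frostman
condition `σ(B(x,r)) ≤ (2D)^s diam(spt σ)^{-s} r^s` with `s = -log β / log D > 0`. -/
theorem uniformlyPerfect_frostman {n : ℕ} (D β : ℝ) (hD : 1 < D) (hβ0 : 0 < β) (hβ1 : β < 1)
    (σ : Measure (EuclideanSpace ℝ (Fin n))) [IsProbabilityMeasure σ]
    (hσ : UniformlyPerfect σ D β) :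
    0 < -Real.log β / Real.log D ∧
      ∀ x, ∀ r > (0:ℝ),
        σ (ball x r) ≤ ENNReal.ofReal
          ((2 * D) ^ (-Real.log β / Real.log D)
            * Metric.diam (spt σ) ^ (-(-Real.log β / Real.log D))
            * r ^ (-Real.log β / Real.log D)) := by
  obtain ⟨hdiam, hσ⟩ := hσ
  rw [neg_div, ← Real.logb]
  set s := -Real.logb D β
  have hβ : β = D ^ (-s) := by rw [neg_neg, Real.rpow_logb (by positivity) hD.ne' hβ0]
  have hrd : ReverseDoubling σ (spt σ) D (ENNReal.ofReal (D ^ (-s))) := hβ ▸ hσ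
  have hbdd := hrd.isBounded (by positivity) (hβ ▸ ENNReal.ofReal_lt_one.2 hβ1)
  have hd : 0 < diam (spt σ) := ENNReal.toReal_pos hdiam.ne' hbdd.ediam_ne_top
  have hs : 0 < s := neg_pos.2 (Real.logb_neg hD hβ0 hβ1)
  refine ⟨hs, fun x r hr => ?_⟩
  calc σ (ball x r) ≤ ENNReal.ofReal ((2 * D * r / diam (spt σ)) ^ s) :=
        hrd.measure_ball_le_rpow hD hs.le hd x hr
    _ = _ := by
      rw [Real.div_rpow (by positivity) hd.le, Real.mul_rpow (by positivity) hr.le,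
        div_eq_mul_inv, ← Real.rpow_neg hd.le]
      congr 1
      ring
end

section
/- Let $\mathcal{R}$ be a finite family of pairwise disjoint rectangles in $\mathbb{R}^2$, each of dimensions $\delta \times \Delta$ ($\delta \le \Delta$), all parallel to a fixed rectangle $R_0$ of dimensions $\delta\times\Delta$, and all intersecting a fixed square $\mathbf{Q}$ of side length $\Delta$. Then the sumsets $\{x + y : x \in R,\ y \in R_0\}$, $R \in \mathcal{R}$, have overlap bounded by an absolute constant: every point of $\mathbb{R}^2$ lies in at most $C$ of these sumsets, for an absolute constant $C$. -/
/-!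
Project onto the axes `e, f` of `R₀`. A translate `R₀ + t` that meets the sumset through `p`
has `⟪t, e⟫` in a window of length `2δ`, and one that meets the `Δ`-square at `q` has `⟪t, f⟫`
in a window of length `5Δ`. Two translates whose offsets differ by at most `δ` along `e` and at
most `Δ` along `f` overlap, so disjoint ones occupy distinct cells of the `δ × Δ` grid, and the
two windows contain at most `3 · 6` cells.
-/

open Metric
open scoped Classical

/-- The rectangle of dimensions `δ × Δ` with sides in the orthonormal directions `e, f`,
anchored at the origin. -/
def rect (e f : EuclideanSpace ℝ (Fin 2)) (δ Δ : ℝ) : Set (EuclideanSpace ℝ (Fin 2)) :=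
  {x | (inner ℝ x e : ℝ) ∈ Set.Icc 0 δ ∧ (inner ℝ x f : ℝ) ∈ Set.Icc 0 Δ}

open Set RealInnerProductSpace

lemma exists_mem_Icc_sub_mem_Icc {s δ : ℝ} (h : |s| ≤ δ) : ∃ a ∈ Icc 0 δ, a - s ∈ Icc 0 δ := by
  obtain ⟨h₁, h₂⟩ := abs_le.mp h
  have hδ : 0 ≤ δ := (abs_nonneg s).trans h
  rcases le_total 0 s with hs | hs
  · exact ⟨s, ⟨hs, h₂⟩, by rw [sub_self]; exact ⟨le_rfl, hδ⟩⟩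
  · exact ⟨0, ⟨le_rfl, hδ⟩, by rw [zero_sub]; exact ⟨neg_nonneg.mpr hs, neg_le.mp h₁⟩⟩

lemma floor_sub_div_mem_Icc {u a b δ : ℝ} {m : ℕ} (hδ : 0 < δ) (hu : u ∈ Icc a b)
    (hm : b - a ≤ m * δ) : ⌊(u - a) / δ⌋ ∈ Finset.Icc (0 : ℤ) m := by
  rw [Finset.mem_Icc]
  constructor
  · exact Int.floor_nonneg.mpr (div_nonneg (by linarith [hu.1]) hδ.le)
  · calc ⌊(u - a) / δ⌋ ≤ ⌊(m : ℝ)⌋ :=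
          Int.floor_le_floor ((div_le_iff₀ hδ).mpr (by linarith [hu.2]))
      _ = m := Int.floor_natCast m

lemma abs_sub_lt_of_floor_sub_div_eq {u u' a δ : ℝ} (hδ : 0 < δ)
    (h : ⌊(u - a) / δ⌋ = ⌊(u' - a) / δ⌋) : |u - u'| < δ := by
  have := Int.abs_sub_lt_one_of_floor_eq_floor h
  rwa [div_sub_div_same, sub_sub_sub_cancel_right, abs_div, abs_of_pos hδ, div_lt_one hδ] at this

lemma card_le_of_separated {ι : Type*} (S : Finset ι) (u v : ι → ℝ) {a b c d δ Δ : ℝ} {m n : ℕ}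
    (hδ : 0 < δ) (hΔ : 0 < Δ) (hu : ∀ i ∈ S, u i ∈ Icc a b) (hm : b - a ≤ m * δ)
    (hv : ∀ i ∈ S, v i ∈ Icc c d) (hn : d - c ≤ n * Δ)
    (hsep : ∀ i ∈ S, ∀ j ∈ S, i ≠ j → δ ≤ |u i - u j| ∨ Δ ≤ |v i - v j|) :
    S.card ≤ (m + 1) * (n + 1) := by
  let cell : ι → ℤ × ℤ := fun i => (⌊(u i - a) / δ⌋, ⌊(v i - c) / Δ⌋)
  have hmaps : ∀ i ∈ S, cell i ∈ Finset.Icc (0 : ℤ) m ×ˢ Finset.Icc (0 : ℤ) n := fun i hi =>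
    Finset.mem_product.mpr
      ⟨floor_sub_div_mem_Icc hδ (hu i hi) hm, floor_sub_div_mem_Icc hΔ (hv i hi) hn⟩
  have hinj : InjOn cell S := by
    intro i hi j hj hij
    by_contra hne
    obtain ⟨hcu, hcv⟩ := Prod.mk.inj hij
    rcases hsep i hi j hj hne with h | h
    · exact (abs_sub_lt_of_floor_sub_div_eq hδ hcu).not_ge h
    · exact (abs_sub_lt_of_floor_sub_div_eq hΔ hcv).not_ge h
  calc S.card ≤ (Finset.Icc (0 : ℤ) m ×ˢ Finset.Icc (0 : ℤ) n).card :=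
        Finset.card_le_card_of_injOn cell hmaps hinj
    _ = (m + 1) * (n + 1) := by
        simp [Finset.card_product]

lemma abs_inner_le_card_mul {ι : Type*} [Fintype ι] {x f : EuclideanSpace ℝ ι} {r : ℝ}
    (hx : ∀ i, |x i| ≤ r) : |⟪x, f⟫| ≤ Fintype.card ι * r * ‖f‖ := by
  calc |⟪x, f⟫| = |∑ i, x i * f i| := by simp [PiLp.inner_apply, mul_comm]
    _ ≤ ∑ i, |x i| * |f i| := by
          simpa only [abs_mul] using Finset.abs_sum_le_sum_abs (fun i => x i * f i) Finset.univ
    _ ≤ ∑ _i : ι, r * ‖f‖ := Finset.sum_le_sum fun i _ =>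
          mul_le_mul (hx i) (PiLp.norm_apply_le f i) (abs_nonneg _) ((abs_nonneg _).trans (hx i))
    _ = Fintype.card ι * r * ‖f‖ := by simp [mul_assoc]

lemma inner_smul_add_smul_left {E : Type*} [NormedAddCommGroup E] [InnerProductSpace ℝ E]
    {e f : E} (he : ‖e‖ = 1) (hf : ‖f‖ = 1) (hef : ⟪e, f⟫ = 0) (a b : ℝ) :
    ⟪a • e + b • f, e⟫ = a ∧ ⟪a • e + b • f, f⟫ = b := by
  simp [inner_add_left, real_inner_smul_left, he, hf, hef, real_inner_comm e f]

section Rect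

variable {e f : EuclideanSpace ℝ (Fin 2)} {δ Δ : ℝ}

lemma inner_mem_Icc_of_eq_add_add {p x t y : EuclideanSpace ℝ (Fin 2)}
    (hx : x ∈ rect e f δ Δ) (hy : y ∈ rect e f δ Δ) (hp : p = x + t + y) :
    ⟪t, e⟫ ∈ Icc (⟪p, e⟫ - 2 * δ) ⟪p, e⟫ := by
  have : ⟪p, e⟫ = ⟪x, e⟫ + ⟪t, e⟫ + ⟪y, e⟫ := by rw [hp, inner_add_left, inner_add_left]
  obtain ⟨⟨hx₀, hx₁⟩, -⟩ := hx
  obtain ⟨⟨hy₀, hy₁⟩, -⟩ := hy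
  constructor <;> linarith

lemma inner_mem_Icc_of_mem_square {q x t : EuclideanSpace ℝ (Fin 2)} (hf : ‖f‖ = 1)
    (hx : x - t ∈ rect e f δ Δ) (hxq : ∀ i, x i ∈ Icc (q i) (q i + Δ)) :
    ⟪t, f⟫ ∈ Icc (⟪q, f⟫ - 3 * Δ) (⟪q, f⟫ + 2 * Δ) := by
  have hsq : |⟪x - q, f⟫| ≤ 2 * Δ := by
    have := abs_inner_le_card_mul (f := f) (x := x - q) (r := Δ) fun i => by
      rw [PiLp.sub_apply, abs_le]; constructor <;> linarith [(hxq i).1, (hxq i).2]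
    simpa [hf] using this
  have : ⟪t, f⟫ = ⟪x - q, f⟫ - ⟪x - t, f⟫ + ⟪q, f⟫ := by
    rw [inner_sub_left, inner_sub_left]; ring
  obtain ⟨-, hxt₀, hxt₁⟩ := hx
  obtain ⟨hsq₀, hsq₁⟩ := abs_le.mp hsq
  constructor <;> linarith

lemma not_disjoint_rect_translates (he : ‖e‖ = 1) (hf : ‖f‖ = 1) (hef : ⟪e, f⟫ = 0)
    {t t' : EuclideanSpace ℝ (Fin 2)} (h₁ : |⟪t, e⟫ - ⟪t', e⟫| ≤ δ)
    (h₂ : |⟪t, f⟫ - ⟪t', f⟫| ≤ Δ) :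
    ¬ Disjoint {x | x - t ∈ rect e f δ Δ} {x | x - t' ∈ rect e f δ Δ} := by
  rw [abs_sub_comm] at h₁ h₂
  obtain ⟨a, ha, ha'⟩ := exists_mem_Icc_sub_mem_Icc h₁
  obtain ⟨b, hb, hb'⟩ := exists_mem_Icc_sub_mem_Icc h₂
  obtain ⟨hae, hbf⟩ := inner_smul_add_smul_left he hf hef a b
  have hx : t + (a • e + b • f) - t = a • e + b • f := by abel
  have hx' : t + (a • e + b • f) - t' = a • e + b • f - (t' - t) := by abel
  refine Set.not_disjoint_iff.mpr ⟨t + (a • e + b • f), ?_, ?_⟩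
  · show _ - t ∈ rect e f δ Δ
    rw [hx]
    simp only [rect, Set.mem_ofPred_eq, hae, hbf]
    exact ⟨ha, hb⟩
  · show _ - t' ∈ rect e f δ Δ
    rw [hx']
    simp only [rect, Set.mem_ofPred_eq, inner_sub_left, hae, hbf]
    exact ⟨ha', hb'⟩

end Rect

/-- for a finite family of pairwise disjoint translates `R₀ + t`, `t ∈ Tr`,
of a fixed `δ×Δ`-rectangle `R₀`, all meeting a fixed `Δ`-square, the sumsets
`{x + y : x ∈ R₀ + t, y ∈ R₀}` have overlap bounded by an absolute constant. -/
theorem sumsets_bounded_overlap :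
    ∃ C : ℕ, ∀ (δ Δ : ℝ), 0 < δ → δ ≤ Δ →
      ∀ (e f : EuclideanSpace ℝ (Fin 2)), ‖e‖ = 1 → ‖f‖ = 1 → (inner ℝ e f : ℝ) = 0 →
      ∀ (q : EuclideanSpace ℝ (Fin 2)) (Tr : Finset (EuclideanSpace ℝ (Fin 2))),
        (∀ t ∈ Tr, ∀ t' ∈ Tr, t ≠ t' →
          Disjoint {x | x - t ∈ rect e f δ Δ} {x | x - t' ∈ rect e f δ Δ}) →
        (∀ t ∈ Tr, ∃ x : EuclideanSpace ℝ (Fin 2), x - t ∈ rect e f δ Δ ∧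
          ∀ i, x i ∈ Set.Icc (q i) (q i + Δ)) →
        ∀ p : EuclideanSpace ℝ (Fin 2),
          (Tr.filter (fun t => ∃ x ∈ rect e f δ Δ, ∃ y ∈ rect e f δ Δ,
            p = (x + t) + y)).card ≤ C := by
  refine ⟨(2 + 1) * (5 + 1), fun δ Δ hδ hδΔ e f he hf hef q Tr hdisj hmeet p => ?_⟩
  refine card_le_of_separated _ (⟪·, e⟫) (⟪·, f⟫) (a := ⟪p, e⟫ - 2 * δ) (b := ⟪p, e⟫)
    (c := ⟪q, f⟫ - 3 * Δ) (d := ⟪q, f⟫ + 2 * Δ) hδ (hδ.trans_le hδΔ) ?_ (by push_cast; linarith)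
    ?_ (by push_cast; linarith) ?_
  · intro t ht
    obtain ⟨-, x, hx, y, hy, hp⟩ := Finset.mem_filter.mp ht
    exact inner_mem_Icc_of_eq_add_add hx hy hp
  · intro t ht
    obtain ⟨x, hx, hxq⟩ := hmeet t (Finset.mem_of_mem_filter t ht)
    exact inner_mem_Icc_of_mem_square hf hx hxq
  · intro t ht t' ht' hne
    by_contra! hclose
    exact not_disjoint_rect_translates he hf hef hclose.1.le hclose.2.le
      (hdisj t (Finset.mem_of_mem_filter t ht) t' (Finset.mem_of_mem_filter t' ht') hne)
end
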